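/- For m, n ≥ 1, the inclusion Λ^{m,n}ᵢ = (Λᵐᵢ × Δⁿ) ∪ (Δᵐ × ∂Δⁿ) ↪ Δᵐ × Δⁿ is an m-expansion for every 0 ≤ i ≤ m, and the inclusion Λ̃^{m,n}ⱼ = (∂Δᵐ × Δⁿ) ∪ (Δᵐ × Λⁿⱼ) ↪ Δᵐ × Δⁿ is an n-expansion for every 0 ≤ j ≤ n. -/

import Mathlib

/-!
A nondegenerate simplex of `Δᵐ × Δⁿ` is a chain in the grid `[m] × [n]`, and it lies outside
`Λ^{m,n}ᵢ` exactly when its vertices meet every row and every column other than `i`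
(`Spanning`). For such a chain `C`, a row `b` is admissible if `(i, b)` can be added to `C`
keeping it a chain and removed from `C` keeping it spanning; the pivot of `C` is the least
admissible row, which exists as soon as `m ≥ 1`. Adding the pivot vertex pairs every spanning
chain missing its pivot with a pivotal chain, of which it is the face opposite the pivot vertex.

Attach the pivotal chains one at a time, ordered by cardinality and then by the number of
vertices off column `i`. A pivotal chain `C` is then glued along the horn opposite its pivot
vertex: every other face of `C` either lies in `Λ^{m,n}ᵢ` or pairs with a pivotal chain of
smaller key, which is already attached and contains it. Pivotal chains meet all `m + 1`
columns, so these horns have dimension at least `m`, and the dimensions increase weakly.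
Exchanging the two factors gives the second statement.
-/

open CategoryTheory CategoryTheory.Limits Simplicial Opposite

universe v u

namespace Paper

/-- Auxiliary inductive for `m`-expansions: `ExpansionAux m n₀ i` witnesses a
finite filtration exhibiting `i` as a composite of pushouts of horn
inclusions `Λ[n,j] ↪ Δ[n]` with `m ≤ n`, the dimensions `n` being weakly
monotone and bounded below by `n₀`. -/
inductive ExpansionAux (m : ℕ) : ℕ → ∀ {S T : SSet.{v}}, (S ⟶ T) → Prop where
  | of_iso {S T : SSet.{v}} (n₀ : ℕ) (i : S ⟶ T) (h : IsIso i) : ExpansionAux m n₀ i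
  /-- Attach one horn. -/
  | step {S T U : SSet.{v}} (n₀ n : ℕ) (hmn : m ≤ n) (h₀ : n₀ ≤ n) (j : Fin (n + 1))
      (y : (Λ[n, j] : SSet.{v}) ⟶ S) (i : S ⟶ T) (x : Δ[n] ⟶ T)
      (hpo : IsPushout y (SSet.horn n j).ι i x)
      {rest : T ⟶ U} (hrest : ExpansionAux m n rest) :
      ExpansionAux m n₀ (i ≫ rest)

/-- `i : S ⟶ T` is an `m`-expansion: it is a finite composite of pushouts of
horn inclusions `Λ[n,j] ↪ Δ[n]` with `n ≥ m`, attached in order of weakly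
monotone dimension. -/
def IsExpansion (m : ℕ) {S T : SSet.{v}} (i : S ⟶ T) : Prop :=
  ExpansionAux m 0 i

/-- The pointwise product of two simplicial sets. -/
def prodSSet (A B : SSet.{v}) : SSet.{v} where
  obj k := A.obj k × B.obj k
  map α := TypeCat.ofHom fun p => (A.map α p.1, B.map α p.2)

/-- The subcomplex `Λ^{m,n}ᵢ = (Λᵐᵢ × Δⁿ) ∪ (Δᵐ × ∂Δⁿ)` of the prism
`Δᵐ × Δⁿ`. -/
def prismHorn (m n : ℕ) (i : Fin (m + 1)) : SSet.{v} where
  obj k := { p : (Δ[m] : SSet.{v}).obj k × (Δ[n] : SSet.{v}).obj k //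
    (Set.range ((SSet.stdSimplex.objEquiv p.1).toOrderHom) ∪ {i} ≠ Set.univ) ∨
      ¬ Function.Surjective ((SSet.stdSimplex.objEquiv p.2).toOrderHom) }
  map {k k'} α := TypeCat.ofHom fun p => ⟨((Δ[m] : SSet.{v}).map α p.1.1, (Δ[n] : SSet.{v}).map α p.1.2), by
    rcases p.2 with h | h
    · refine Or.inl fun hnew => h (Set.eq_univ_of_univ_subset ?_)
      intro x _
      have hx : x ∈ Set.range ((SSet.stdSimplex.objEquiv ((Δ[m] : SSet.{v}).map α p.1.1)).toOrderHom) ∪ {i} := by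
        rw [hnew]; trivial
      rcases hx with ⟨a, ha⟩ | hx
      · exact Or.inl ⟨α.unop.toOrderHom a, ha⟩
      · exact Or.inr hx
    · refine Or.inr fun hnew => h fun b => ?_
      obtain ⟨a, ha⟩ := hnew b
      exact ⟨_, ha⟩⟩

/-- The inclusion `Λ^{m,n}ᵢ ↪ Δᵐ × Δⁿ`. -/
def prismHornIncl (m n : ℕ) (i : Fin (m + 1)) :
    prismHorn.{v} m n i ⟶ prodSSet Δ[m] Δ[n] where
  app k := TypeCat.ofHom fun p => Subtype.val p

/-- The subcomplex `Λ̃^{m,n}ⱼ = (∂Δᵐ × Δⁿ) ∪ (Δᵐ × Λⁿⱼ)` of the prism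
`Δᵐ × Δⁿ`. -/
def prismHorn' (m n : ℕ) (j : Fin (n + 1)) : SSet.{v} where
  obj k := { p : (Δ[m] : SSet.{v}).obj k × (Δ[n] : SSet.{v}).obj k //
    ¬ Function.Surjective ((SSet.stdSimplex.objEquiv p.1).toOrderHom) ∨
      (Set.range ((SSet.stdSimplex.objEquiv p.2).toOrderHom) ∪ {j} ≠ Set.univ) }
  map {k k'} α := TypeCat.ofHom fun p => ⟨((Δ[m] : SSet.{v}).map α p.1.1, (Δ[n] : SSet.{v}).map α p.1.2), by
    rcases p.2 with h | h
    · refine Or.inl fun hnew => h fun b => ?_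
      obtain ⟨a, ha⟩ := hnew b
      exact ⟨_, ha⟩
    · refine Or.inr fun hnew => h (Set.eq_univ_of_univ_subset ?_)
      intro x _
      have hx : x ∈ Set.range ((SSet.stdSimplex.objEquiv ((Δ[n] : SSet.{v}).map α p.1.2)).toOrderHom) ∪ {j} := by
        rw [hnew]; trivial
      rcases hx with ⟨a, ha⟩ | hx
      · exact Or.inl ⟨α.unop.toOrderHom a, ha⟩
      · exact Or.inr hx⟩

/-- The inclusion `Λ̃^{m,n}ⱼ ↪ Δᵐ × Δⁿ`. -/
def prismHornIncl' (m n : ℕ) (j : Fin (n + 1)) :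
    prismHorn'.{v} m n j ⟶ prodSSet Δ[m] Δ[n] where
  app k := TypeCat.ofHom fun p => Subtype.val p

end Paper

lemma IsChain.insert_insert {α : Type*} {r : α → α → Prop} {s : Set α} {a b : α}
    (ha : IsChain r (insert a s)) (hb : IsChain r (insert b s)) (hab : r a b ∨ r b a) :
    IsChain r (insert a (insert b s)) := by
  refine hb.insert fun c hc hac => ?_
  rcases hc with rfl | hc
  · exact hab
  · exact ha (Set.mem_insert a s) (Set.mem_insert_of_mem a hc) hac

lemma Prod.le_or_le_of_fst_eq {α β : Type*} [Preorder α] [LinearOrder β] {x y : α × β}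
    (h : x.1 = y.1) : x ≤ y ∨ y ≤ x :=
  (le_total x.2 y.2).imp (fun h' => ⟨h.le, h'⟩) (fun h' => ⟨h.ge, h'⟩)

lemma IsChain.exists_strictMono_image_eq {α β : Type*} [LinearOrder α] [LinearOrder β]
    {C : Finset (α × β)} (hC : IsChain (· ≤ ·) (C : Set (α × β))) {k : ℕ}
    (hk : C.card = k) :
    ∃ f : Fin k → α × β, StrictMono f ∧ Finset.univ.image f = C := by
  let g := (C.map toLex.toEmbedding).orderEmbOfFin (by simpa using hk)
  have hmem (a : Fin k) : ofLex (g a) ∈ C := by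
    simpa using (C.map toLex.toEmbedding).orderEmbOfFin_mem (by simpa using hk) a
  have hf : StrictMono fun a => ofLex (g a) := fun a b hab => by
    have hlex : g a < g b := g.strictMono hab
    rcases hC.total (Finset.mem_coe.2 (hmem a)) (Finset.mem_coe.2 (hmem b)) with h | h
    · exact h.lt_of_ne fun h' => hlex.ne (by simpa using congrArg toLex h')
    · exact absurd (Prod.Lex.toLex_mono h) hlex.not_ge
  refine ⟨_, hf, Finset.eq_of_subset_of_card_le
    (Finset.image_subset_iff.2 fun a _ => hmem a) ?_⟩
  rw [Finset.card_image_of_injective _ hf.injective, Finset.card_univ, Fintype.card_fin, hk]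

namespace SSet.Subcomplex

lemma isPushout_of_preimage_eq_horn {X : SSet.{v}} (A : X.Subcomplex) {d : ℕ}
    (x : Δ[d] ⟶ X) [Mono x] {j : Fin (d + 1)} (h : A.preimage x = Λ[d, j]) :
    IsPushout (lift (Λ[d, j].ι ≫ x) (by rw [← image_eq_range, image_le_iff, h]))
      Λ[d, j].ι (homOfLE le_sup_left : (A : SSet) ⟶ (A ⊔ range x : X.Subcomplex))
      (lift x le_sup_right) := by
  have sq : BicartSq (Λ[d, j].image x) A (range x) (A ⊔ range x) := by
    refine ⟨rfl, ?_⟩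
    rw [← h]
    ext k y
    simp only [preimage_obj, image_obj, Subfunctor.min_obj, Subfunctor.range_obj,
      Set.mem_inter_iff, Set.mem_image, Set.mem_preimage, Set.mem_range]
    exact ⟨fun ⟨hy, z, hz⟩ => ⟨z, hz ▸ hy, hz⟩, fun ⟨z, hz, hzy⟩ => ⟨hzy ▸ hz, z, hzy⟩⟩
  have : Mono (Λ[d, j].toImage x) := mono_of_mono_fac (toImage_ι _ _)
  have : IsIso (Λ[d, j].toImage x) := isIso_of_mono_of_epi _
  refine sq.isPushout.of_iso (asIso (Λ[d, j].toImage x)).symm (Iso.refl _) (asIso (toRange x)).symm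
    (Iso.refl _) ?_ ?_ ?_ ?_ <;>
    simp only [Iso.symm_hom, asIso_inv, Iso.refl_hom, Category.comp_id, Category.id_comp,
      IsIso.eq_inv_comp, ← Category.assoc, IsIso.comp_inv_eq] <;> rfl

end SSet.Subcomplex

namespace Paper

open SSet

namespace ExpansionAux

variable {m : ℕ}

lemma comp_iso {n₀ : ℕ} {S T : SSet.{v}} {f : S ⟶ T} (h : ExpansionAux m n₀ f)
    {T' : SSet.{v}} (e : T ⟶ T') [IsIso e] : ExpansionAux m n₀ (f ≫ e) := by
  induction h with
  | of_iso n₀ f hf => exact of_iso n₀ _ inferInstance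
  | step n₀ n hmn h₀ j y i x hpo _ ih =>
    rw [Category.assoc]
    exact step n₀ n hmn h₀ j y i x hpo (ih e)

lemma iso_comp {n₀ : ℕ} {S T : SSet.{v}} {f : S ⟶ T} (h : ExpansionAux m n₀ f)
    {S' : SSet.{v}} (e : S' ⟶ S) [IsIso e] : ExpansionAux m n₀ (e ≫ f) := by
  cases h with
  | of_iso n₀ f hf => exact of_iso n₀ _ inferInstance
  | step n₀ n hmn h₀ j y i x hpo hrest =>
    rw [← Category.assoc]
    refine step n₀ n hmn h₀ j (y ≫ inv e) (e ≫ i) x ?_ hrest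
    exact hpo.of_iso (Iso.refl _) (asIso e).symm (Iso.refl _) (Iso.refl _) (by simp) (by simp)
      (by simp) (by simp)

end ExpansionAux

variable {m n : ℕ}

abbrev Grid (m n : ℕ) := Fin (m + 1) × Fin (n + 1)

structure Spanning (i : Fin (m + 1)) (C : Finset (Grid m n)) : Prop where
  col : ∀ a ≠ i, ∃ y ∈ C, y.1 = a
  row : ∀ b, ∃ y ∈ C, y.2 = b

namespace Spanning

variable {i : Fin (m + 1)} {C D : Finset (Grid m n)}

lemma mono (hC : Spanning i C) (h : C ⊆ D) : Spanning i D :=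
  ⟨fun a ha => (hC.col a ha).imp fun _ ⟨hy, hya⟩ => ⟨h hy, hya⟩,
    fun b => (hC.row b).imp fun _ ⟨hy, hyb⟩ => ⟨h hy, hyb⟩⟩

lemma erase_erase {b b' : Fin (n + 1)} (h : Spanning i (C.erase (i, b)))
    (h' : Spanning i (C.erase (i, b'))) : Spanning i ((C.erase (i, b)).erase (i, b')) := by
  obtain rfl | hbb' := eq_or_ne b b'
  · rwa [Finset.erase_idem]
  refine ⟨fun a ha => ?_, fun r => ?_⟩
  · obtain ⟨y, hy, rfl⟩ := h.col a ha
    exact ⟨y, Finset.mem_erase.2 ⟨fun hy' => ha (by rw [hy']), hy⟩, rfl⟩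
  · obtain ⟨y, hy, rfl⟩ := h.row r
    by_cases hyb' : y = (i, b')
    · obtain ⟨z, hz, hzy⟩ := h'.row y.2
      refine ⟨z, ?_, hzy⟩
      rw [Finset.erase_right_comm]
      exact Finset.mem_erase.2 ⟨fun hzb => hbb' (by simpa [hzb, hyb'] using hzy), hz⟩
    · exact ⟨y, Finset.mem_erase.2 ⟨hyb', hy⟩, rfl⟩

end Spanning

def Admissible (i : Fin (m + 1)) (C : Finset (Grid m n)) (b : Fin (n + 1)) : Prop :=
  IsChain (· ≤ ·) (↑(insert (i, b) C) : Set (Grid m n)) ∧ Spanning i (C.erase (i, b))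

/-- Since `sInf ∅ = 0`, this is only meaningful when an admissible row exists
(`admissible_pivot`). -/
noncomputable def pivot (i : Fin (m + 1)) (C : Finset (Grid m n)) : Fin (n + 1) :=
  sInf {b | Admissible i C b}

section Pivot

variable {i : Fin (m + 1)} {C : Finset (Grid m n)}

lemma pivot_le {b : Fin (n + 1)} (h : Admissible i C b) : pivot i C ≤ b :=
  csInf_le' h

lemma admissible_of_mem {y : Grid m n} (hC : Spanning i C) (hy : y ∈ C) (hyi : y.1 ≠ i)
    (hchain : IsChain (· ≤ ·) (insert (i, y.2) (C : Set (Grid m n)))) :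
    Admissible i C y.2 := by
  refine ⟨by rwa [Finset.coe_insert], fun a ha => ?_, fun r => ?_⟩
  · obtain ⟨z, hz, rfl⟩ := hC.col a ha
    exact ⟨z, Finset.mem_erase.2 ⟨fun h => ha (by rw [h]), hz⟩, rfl⟩
  · obtain ⟨z, hz, rfl⟩ := hC.row r
    by_cases hzy : z = (i, y.2)
    · exact ⟨y, Finset.mem_erase.2 ⟨fun h => hyi (by rw [h]), hy⟩, by rw [hzy]⟩
    · exact ⟨z, Finset.mem_erase.2 ⟨hzy, hz⟩, rfl⟩

/-- If some vertex lies left of column `i`, the row of the highest such vertex is admissible;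
otherwise so is the row of the lowest vertex off column `i`. -/
lemma exists_admissible (hm : 1 ≤ m) (hC : IsChain (· ≤ ·) (C : Set (Grid m n)))
    (hS : Spanning i C) : ∃ b, Admissible i C b := by
  by_cases hleft : ∃ y ∈ C, y.1 < i
  · obtain ⟨y, hy, hymax⟩ := (C.filter (·.1 < i)).exists_max_image Prod.snd
      (by simpa [Finset.filter_nonempty_iff] using hleft)
    rw [Finset.mem_filter] at hy
    refine ⟨y.2, admissible_of_mem hS hy.1 hy.2.ne (hC.insert fun z hz' _ => ?_)⟩
    rcases lt_trichotomy z.1 i with hz | hz | hz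
    · exact Or.inr ⟨hz.le, hymax z (Finset.mem_filter.2 ⟨hz', hz⟩)⟩
    · exact Prod.le_or_le_of_fst_eq hz.symm
    · obtain hyz | hzy := hC.total (Finset.mem_coe.2 hy.1) hz'
      · exact Or.inl ⟨hz.le, hyz.2⟩
      · exact absurd (hzy.1.trans_lt hy.2) hz.not_gt
  · push Not at hleft
    obtain ⟨a, ha⟩ : ∃ a : Fin (m + 1), a ≠ i :=
      have : Nontrivial (Fin (m + 1)) := Fin.nontrivial_iff_two_le.2 (by omega)
      exists_ne i
    obtain ⟨y, hy, hymin⟩ := (C.filter (·.1 ≠ i)).exists_min_image Prod.snd (by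
      obtain ⟨y, hy, rfl⟩ := hS.col a ha
      exact ⟨y, Finset.mem_filter.2 ⟨hy, ha⟩⟩)
    rw [Finset.mem_filter] at hy
    refine ⟨y.2, admissible_of_mem hS hy.1 hy.2 (hC.insert fun z hz _ => ?_)⟩
    by_cases hzi : z.1 = i
    · exact Prod.le_or_le_of_fst_eq hzi.symm
    · exact Or.inl ⟨hleft z hz, hymin z (Finset.mem_filter.2 ⟨hz, hzi⟩)⟩

lemma admissible_pivot (hm : 1 ≤ m) (hC : IsChain (· ≤ ·) (C : Set (Grid m n)))
    (hS : Spanning i C) : Admissible i C (pivot i C) :=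
  csInf_mem (exists_admissible hm hC hS)

lemma pivot_erase (hm : 1 ≤ m) (hC : IsChain (· ≤ ·) (C : Set (Grid m n))) (hS : Spanning i C)
    {b : Fin (n + 1)} (hb : (i, b) ∈ C) (hS' : Spanning i (C.erase (i, b))) :
    pivot i (C.erase (i, b)) = pivot i C := by
  have hC' : IsChain (· ≤ ·) (↑(C.erase (i, b)) : Set (Grid m n)) :=
    hC.mono (Finset.coe_subset.2 (Finset.erase_subset _ _))
  have hp := admissible_pivot hm hC hS
  have hp' := admissible_pivot hm hC' hS'
  refine le_antisymm (pivot_le ⟨hp.1.mono ?_, hS'.erase_erase hp.2⟩) (pivot_le ⟨?_, ?_⟩)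
  · exact Finset.coe_subset.2 (Finset.insert_subset_insert _ (Finset.erase_subset _ _))
  · have hCeq : (C : Set (Grid m n)) = insert (i, b) ↑(C.erase (i, b)) := by
      rw [← Finset.coe_insert, Finset.insert_erase hb]
    rw [Finset.coe_insert, hCeq]
    refine IsChain.insert_insert ?_ (hCeq ▸ hC) (Prod.le_or_le_of_fst_eq rfl)
    rw [← Finset.coe_insert]
    exact hp'.1
  · exact hp'.2.mono (Finset.erase_subset_erase _ (Finset.erase_subset _ _))

end Pivot

noncomputable def withPivot (i : Fin (m + 1)) (C : Finset (Grid m n)) : Finset (Grid m n) :=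
  insert (i, pivot i C) C

structure IsPivotal (i : Fin (m + 1)) (C : Finset (Grid m n)) : Prop where
  isChain : IsChain (· ≤ ·) (C : Set (Grid m n))
  spanning : Spanning i C
  pivot_mem : (i, pivot i C) ∈ C

section WithPivot

variable {i : Fin (m + 1)} {C D : Finset (Grid m n)}

lemma subset_withPivot : C ⊆ withPivot i C := Finset.subset_insert _ _

lemma withPivot_of_mem (h : (i, pivot i C) ∈ C) : withPivot i C = C :=
  Finset.insert_eq_of_mem h

lemma pivot_withPivot (hm : 1 ≤ m) (hC : IsChain (· ≤ ·) (C : Set (Grid m n)))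
    (hS : Spanning i C) : pivot i (withPivot i C) = pivot i C := by
  by_cases h : (i, pivot i C) ∈ C
  · rw [withPivot_of_mem h]
  · have hp := admissible_pivot hm hC hS
    have := pivot_erase hm hp.1 (hS.mono subset_withPivot) (Finset.mem_insert_self _ _)
      (by rwa [Finset.erase_insert h])
    rwa [Finset.erase_insert h, eq_comm] at this

lemma isPivotal_withPivot (hm : 1 ≤ m) (hC : IsChain (· ≤ ·) (C : Set (Grid m n)))
    (hS : Spanning i C) : IsPivotal i (withPivot i C) where
  isChain := (admissible_pivot hm hC hS).1
  spanning := hS.mono subset_withPivot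
  pivot_mem := by
    rw [pivot_withPivot hm hC hS]
    exact Finset.mem_insert_self _ _

lemma IsPivotal.lt_card (hC : IsPivotal i C) : m < C.card := by
  have hfst : Finset.univ ⊆ C.image Prod.fst := fun a _ => by
    by_cases ha : a = i
    · exact Finset.mem_image.2 ⟨_, hC.pivot_mem, ha.symm⟩
    · obtain ⟨y, hy, rfl⟩ := hC.spanning.col a ha
      exact Finset.mem_image_of_mem _ hy
  simpa using (Finset.card_le_card hfst).trans Finset.card_image_le

lemma withPivot_eq_iff (hm : 1 ≤ m) (hD : IsPivotal i D) (hCD : C ⊆ D) (hC : Spanning i C) :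
    withPivot i C = D ↔ D.erase (i, pivot i D) ⊆ C := by
  constructor
  · rintro rfl
    rw [pivot_withPivot hm (hD.isChain.mono (Finset.coe_subset.2 hCD)) hC]
    exact Finset.erase_insert_subset _ _
  · intro h
    by_cases hp : (i, pivot i D) ∈ C
    · have hDC : D ⊆ C := by
        simpa only [Finset.insert_erase hD.pivot_mem] using Finset.insert_subset hp h
      rw [le_antisymm hCD hDC]
      exact withPivot_of_mem hD.pivot_mem
    · obtain rfl : C = D.erase (i, pivot i D) :=
        le_antisymm (Finset.subset_erase.2 ⟨hCD, hp⟩) h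
      rw [withPivot, pivot_erase hm hD.isChain hD.spanning hD.pivot_mem hC,
        Finset.insert_erase hD.pivot_mem]

end WithPivot

def key (i : Fin (m + 1)) (C : Finset (Grid m n)) : ℕ ×ₗ ℕ :=
  toLex (C.card, (C.filter (·.1 ≠ i)).card)

section Key

variable {i : Fin (m + 1)} {C D : Finset (Grid m n)}

lemma key_lt_of_card_lt (h : C.card < D.card) : key i C < key i D :=
  Prod.Lex.toLex_lt_toLex.2 (Or.inl h)

lemma card_le_of_key_le (h : key i C ≤ key i D) : C.card ≤ D.card := by
  rcases Prod.Lex.toLex_le_toLex.1 h with h | h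
  · exact h.le
  · exact h.1.le

/-- A spanning face of a pivotal chain `D` is paired either with `D` or with a pivotal chain of
smaller key. -/
lemma withPivot_eq_or_key_lt (hm : 1 ≤ m) (hD : IsPivotal i D) (hCD : C ⊆ D)
    (hC : Spanning i C) : withPivot i C = D ∨ key i (withPivot i C) < key i D := by
  obtain rfl | hlt := eq_or_ssubset_of_subset hCD
  · exact Or.inl (withPivot_of_mem hD.pivot_mem)
  by_cases hCp : (i, pivot i C) ∈ C
  · rw [withPivot_of_mem hCp]
    exact Or.inr (key_lt_of_card_lt (Finset.card_lt_card hlt))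
  have hcard : (withPivot i C).card = C.card + 1 := Finset.card_insert_of_notMem hCp
  rcases Nat.lt_or_eq_of_le (Finset.card_lt_card hlt) with h | h
  · exact Or.inr (key_lt_of_card_lt (hcard ▸ h))
  obtain ⟨⟨a, b⟩, hxD, hxC⟩ := Finset.exists_of_ssubset hlt
  obtain rfl : C = D.erase (a, b) := Finset.eq_of_subset_of_card_le
    (Finset.subset_erase.2 ⟨hCD, hxC⟩) (by rw [Finset.card_erase_of_mem hxD]; omega)
  by_cases ha : a = i
  · subst ha
    have hp := pivot_erase hm hD.isChain hD.spanning hxD hC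
    have hx : (a, pivot a D) = (a, b) := by
      by_contra hne
      exact hCp (hp ▸ Finset.mem_erase.2 ⟨hne, hD.pivot_mem⟩)
    left
    rw [withPivot, hp, hx, Finset.insert_erase hxD]
  · refine Or.inr (Prod.Lex.toLex_lt_toLex.2 (Or.inr ⟨hcard.trans h, ?_⟩))
    simp only [withPivot, Finset.filter_insert, ne_eq, not_true_eq_false, if_false,
      Finset.filter_erase]
    exact Finset.card_erase_lt_of_mem (Finset.mem_filter.2 ⟨hxD, ha⟩)

end Key

section Prism

variable {k k' : SimplexCategoryᵒᵖ}

def vertex (p : (prodSSet.{v} Δ[m] Δ[n]).obj k) : Fin (k.unop.len + 1) →o Grid m n :=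
  (stdSimplex.asOrderHom p.1).prod (stdSimplex.asOrderHom p.2)

def vertices (p : (prodSSet.{v} Δ[m] Δ[n]).obj k) : Finset (Grid m n) :=
  Finset.univ.image (vertex p)

lemma vertices_map_subset (α : k ⟶ k') (p : (prodSSet.{v} Δ[m] Δ[n]).obj k) :
    vertices ((prodSSet.{v} Δ[m] Δ[n]).map α p) ⊆ vertices p := by
  intro y hy
  obtain ⟨a, -, rfl⟩ := Finset.mem_image.1 hy
  exact Finset.mem_image_of_mem _ (Finset.mem_univ _)

lemma mem_vertices_iff {p : (prodSSet.{v} Δ[m] Δ[n]).obj k} {y : Grid m n} :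
    y ∈ vertices p ↔ ∃ a, vertex p a = y := by
  simp [vertices]

lemma isChain_vertices (p : (prodSSet.{v} Δ[m] Δ[n]).obj k) :
    IsChain (· ≤ ·) (vertices p : Set (Grid m n)) := by
  rw [vertices, Finset.coe_image, Finset.coe_univ, Set.image_univ]
  exact (vertex p).monotone.isChain_range

lemma spanning_vertices_iff (i : Fin (m + 1)) (p : (prodSSet.{v} Δ[m] Δ[n]).obj k) :
    Spanning i (vertices p) ↔
      Set.range (stdSimplex.objEquiv p.1).toOrderHom ∪ {i} = Set.univ ∧
      Function.Surjective (stdSimplex.objEquiv p.2).toOrderHom := by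
  have hcol : (∀ a ≠ i, ∃ y ∈ vertices p, y.1 = a) ↔
      Set.range (stdSimplex.objEquiv p.1).toOrderHom ∪ {i} = Set.univ := by
    simp only [mem_vertices_iff, Set.eq_univ_iff_forall, Set.mem_union, Set.mem_range,
      Set.mem_singleton_iff, or_iff_not_imp_right]
    exact forall₂_congr fun a _ =>
      ⟨fun ⟨_, ⟨x, hx⟩, hy⟩ => ⟨x, by rw [← hy, ← hx]; rfl⟩,
      fun ⟨x, hx⟩ => ⟨_, ⟨x, rfl⟩, hx⟩⟩
  have hrow : (∀ b, ∃ y ∈ vertices p, y.2 = b) ↔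
      Function.Surjective (stdSimplex.objEquiv p.2).toOrderHom := by
    simp only [mem_vertices_iff]
    exact forall_congr' fun b =>
      ⟨fun ⟨_, ⟨x, hx⟩, hy⟩ => ⟨x, by rw [← hy, ← hx]; rfl⟩,
      fun ⟨x, hx⟩ => ⟨_, ⟨x, rfl⟩, hx⟩⟩
  rw [← hcol, ← hrow]
  exact ⟨fun h => ⟨h.col, h.row⟩, fun h => ⟨h.1, h.2⟩⟩

lemma mem_range_prismHornIncl_iff (i : Fin (m + 1)) (p : (prodSSet.{v} Δ[m] Δ[n]).obj k) :
    p ∈ (Subcomplex.range (prismHornIncl.{v} m n i)).obj k ↔ ¬ Spanning i (vertices p) := by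
  rw [spanning_vertices_iff, not_and_or]
  exact ⟨fun ⟨q, hq⟩ => hq ▸ q.2, fun h => ⟨⟨p, h⟩, rfl⟩⟩

lemma ext_of_vertex_eq {p q : (prodSSet.{v} Δ[m] Δ[n]).obj k} (h : vertex p = vertex q) :
    p = q := by
  have h₁ : stdSimplex.asOrderHom p.1 = stdSimplex.asOrderHom q.1 :=
    OrderHom.ext _ _ (funext fun a => congrArg Prod.fst (DFunLike.congr_fun h a))
  have h₂ : stdSimplex.asOrderHom p.2 = stdSimplex.asOrderHom q.2 :=
    OrderHom.ext _ _ (funext fun a => congrArg Prod.snd (DFunLike.congr_fun h a))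
  exact Prod.ext (stdSimplex.objEquiv.injective (SimplexCategory.Hom.ext _ _ h₁))
    (stdSimplex.objEquiv.injective (SimplexCategory.Hom.ext _ _ h₂))

def stage (i : Fin (m + 1)) (A : Finset (Finset (Grid m n))) :
    (prodSSet.{v} Δ[m] Δ[n]).Subcomplex where
  obj _ := {p | ¬ Spanning i (vertices p) ∨ ∃ C ∈ A, vertices p ⊆ C}
  map α p hp := hp.imp (fun h h' => h (h'.mono (vertices_map_subset α p)))
    fun ⟨C, hC, h⟩ => ⟨C, hC, (vertices_map_subset α p).trans h⟩

lemma stage_empty (i : Fin (m + 1)) :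
    stage.{v} i (∅ : Finset (Finset (Grid m n))) =
      Subcomplex.range (prismHornIncl.{v} m n i) := by
  ext k p
  rw [mem_range_prismHornIncl_iff]
  simp [stage]

def toPrism {d : ℕ} (f : Fin (d + 1) → Grid m n) (hf : Monotone f) :
    Δ[d] ⟶ prodSSet.{v} Δ[m] Δ[n] where
  app _ := TypeCat.ofHom fun α =>
    (stdSimplex.objMk ⟨fun a => (f (stdSimplex.asOrderHom α a)).1,
      fun _ _ h => (hf ((stdSimplex.asOrderHom α).monotone h)).1⟩,
     stdSimplex.objMk ⟨fun a => (f (stdSimplex.asOrderHom α a)).2,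
      fun _ _ h => (hf ((stdSimplex.asOrderHom α).monotone h)).2⟩)
  naturality _ _ _ := rfl

variable {d : ℕ} {f : Fin (d + 1) → Grid m n}

lemma vertex_toPrism (hf : Monotone f) (α : (Δ[d] : SSet.{v}).obj k) :
    ⇑(vertex ((toPrism.{v} f hf).app k α)) = f ∘ stdSimplex.asOrderHom α :=
  rfl

lemma vertices_toPrism (hf : Monotone f) (α : (Δ[d] : SSet.{v}).obj k) :
    vertices ((toPrism.{v} f hf).app k α) =
      (Finset.univ.image (stdSimplex.asOrderHom α)).image f := by
  rw [vertices, vertex_toPrism, Finset.image_image]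

variable (hf : StrictMono f)
include hf

lemma mono_toPrism : Mono (toPrism.{v} f hf.monotone) := by
  have (k : SimplexCategoryᵒᵖ) : Mono ((toPrism.{v} f hf.monotone).app k) := by
    refine (mono_iff_injective _).2 fun α β h => ?_
    have h' : f ∘ stdSimplex.asOrderHom α = f ∘ stdSimplex.asOrderHom β := by
      rw [← vertex_toPrism hf.monotone, ← vertex_toPrism hf.monotone, h]
    have h' := congrFun h'
    exact stdSimplex.objEquiv.injective (SimplexCategory.Hom.ext _ _
      (OrderHom.ext _ _ (funext fun a => hf.injective (h' a))))
  exact NatTrans.mono_of_mono_app _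
lemma mem_range_toPrism_iff {p : (prodSSet.{v} Δ[m] Δ[n]).obj k} :
    p ∈ (Subcomplex.range (toPrism.{v} f hf.monotone)).obj k ↔
      vertices p ⊆ Finset.univ.image f := by
  constructor
  · rintro ⟨α, rfl⟩
    rw [vertices_toPrism]
    exact Finset.image_subset_image (Finset.subset_univ _)
  · intro h
    have hv (a : Fin (k.unop.len + 1)) : vertex p a ∈ Set.range f := by
      simpa using h (mem_vertices_iff.2 ⟨a, rfl⟩)
    let e := hf.orderIso f
    refine ⟨stdSimplex.objMk ⟨fun a => e.symm ⟨vertex p a, hv a⟩,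
      fun a b hab => e.symm.monotone ((vertex p).monotone hab)⟩, ext_of_vertex_eq ?_⟩
    refine OrderHom.ext _ _ (funext fun a => ?_)
    exact congrArg Subtype.val (e.apply_symm_apply ⟨vertex p a, hv a⟩)

lemma preimage_toPrism_eq_horn {A : (prodSSet.{v} Δ[m] Δ[n]).Subcomplex} (j : Fin (d + 1))
    (hA : ∀ k (p : (prodSSet.{v} Δ[m] Δ[n]).obj k), vertices p ⊆ Finset.univ.image f →
      (p ∈ A.obj k ↔ ¬ (Finset.univ.image f).erase (f j) ⊆ vertices p)) :
    A.preimage (toPrism.{v} f hf.monotone) = Λ[d, j] := by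
  ext k α
  have hsub : vertices ((toPrism.{v} f hf.monotone).app k α) ⊆ Finset.univ.image f :=
    (mem_range_toPrism_iff hf).1 ⟨α, rfl⟩
  rw [Subcomplex.preimage_obj, Set.mem_preimage, hA k _ hsub, vertices_toPrism, SSet.mem_horn_iff,
    ← Finset.image_erase hf.injective, Finset.image_subset_image_iff hf.injective]
  refine not_congr ⟨fun h => Set.eq_univ_of_forall fun a => ?_, fun h a ha => ?_⟩
  · by_cases ha : a = j
    · exact Or.inr ha
    · exact Or.inl (by simpa using h (Finset.mem_erase.2 ⟨ha, Finset.mem_univ a⟩))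
  · have := h ▸ Set.mem_univ a
    simpa [(Finset.mem_erase.1 ha).1] using this

end Prism

def IsInitialSegment (i : Fin (m + 1)) (A : Finset (Finset (Grid m n))) : Prop :=
  ∀ C ∈ A, IsPivotal i C ∧ ∀ D, IsPivotal i D → key i D < key i C → D ∈ A

section Filtration

variable {i : Fin (m + 1)} {A : Finset (Finset (Grid m n))} {C : Finset (Grid m n)}

lemma IsInitialSegment.insert (hA : IsInitialSegment i A) (hC : IsPivotal i C)
    (hmin : ∀ D, IsPivotal i D → D ∉ A → key i C ≤ key i D) :
    IsInitialSegment i (insert C A) := by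
  intro X hX
  rcases Finset.mem_insert.1 hX with rfl | hX
  · exact ⟨hC, fun D hD hlt =>
      Finset.mem_insert_of_mem (by_contra fun h => (hmin D hD h).not_gt hlt)⟩
  · exact ⟨(hA X hX).1, fun D hD hlt => Finset.mem_insert_of_mem ((hA X hX).2 D hD hlt)⟩

lemma exists_superset_mem_iff (hm : 1 ≤ m) (hA : IsInitialSegment i A)
    {c : Finset (Grid m n)} (hc : IsChain (· ≤ ·) (c : Set (Grid m n))) (hs : Spanning i c) :
    (∃ C ∈ A, c ⊆ C) ↔ withPivot i c ∈ A := by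
  refine ⟨fun ⟨C, hCA, hcC⟩ => ?_, fun h => ⟨_, h, subset_withPivot⟩⟩
  rcases withPivot_eq_or_key_lt hm (hA C hCA).1 hcC hs with h | h
  · rwa [h]
  · exact (hA C hCA).2 _ (isPivotal_withPivot hm hc hs) h

lemma mem_stage_iff_of_subset (hm : 1 ≤ m) (hA : IsInitialSegment i A) (hC : IsPivotal i C)
    (hCA : C ∉ A) (hmin : ∀ D, IsPivotal i D → D ∉ A → key i C ≤ key i D)
    {k : SimplexCategoryᵒᵖ} {p : (prodSSet.{v} Δ[m] Δ[n]).obj k} (hp : vertices p ⊆ C) :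
    p ∈ (stage.{v} i A).obj k ↔ ¬ C.erase (i, pivot i C) ⊆ vertices p := by
  by_cases hs : Spanning i (vertices p)
  · have hc := isChain_vertices p
    change (¬ _ ∨ _) ↔ _
    rw [or_iff_right (not_not.2 hs), exists_superset_mem_iff hm hA hc hs,
      ← withPivot_eq_iff hm hC hp hs]
    refine ⟨fun h h' => hCA (h' ▸ h), fun hne => ?_⟩
    rcases withPivot_eq_or_key_lt hm hC hp hs with h | h
    · exact absurd h hne
    · exact by_contra fun h' => (hmin _ (isPivotal_withPivot hm hc hs) h').not_gt h
  · exact iff_of_true (Or.inl hs)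
      fun h => hs ((admissible_pivot hm hC.isChain hC.spanning).2.mono h)

lemma stage_sup_range_toPrism {d : ℕ} {f : Fin (d + 1) → Grid m n} (hf : StrictMono f) :
    stage.{v} i A ⊔ Subcomplex.range (toPrism.{v} f hf.monotone) =
      stage i (insert (Finset.univ.image f) A) := by
  ext k p
  change (_ ∨ _) ↔ (_ ∨ _)
  rw [mem_range_toPrism_iff hf]
  change ((¬ _ ∨ _) ∨ _) ↔ (_ ∨ _)
  rw [Finset.exists_mem_insert, or_assoc, or_comm (a := ∃ C ∈ A, _)]

lemma stage_eq_top (hm : 1 ≤ m) (h : ∀ D, IsPivotal i D → D ∈ A) : stage.{v} i A = ⊤ := by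
  ext k p
  refine iff_of_true ?_ trivial
  by_cases hs : Spanning i (vertices p)
  · exact Or.inr ⟨_, h _ (isPivotal_withPivot hm (isChain_vertices p) hs), subset_withPivot⟩
  · exact Or.inl hs

end Filtration

theorem expansionAux_stage (hm : 1 ≤ m) (i : Fin (m + 1)) (A : Finset (Finset (Grid m n)))
    (hA : IsInitialSegment i A) (d : ℕ) (hd : ∀ D, IsPivotal i D → D ∉ A → d < D.card) :
    ExpansionAux m d (stage.{v} i A).ι := by
  by_cases hrem : ∃ D, IsPivotal i D ∧ D ∉ A
  swap
  · push Not at hrem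
    rw [stage_eq_top hm hrem]
    exact ExpansionAux.of_iso d _ (Subcomplex.topIso _).isIso_hom
  obtain ⟨C, ⟨hC, hCA⟩, hmin⟩ :=
    Set.exists_min_image {D | IsPivotal i D ∧ D ∉ A} (key i) (Set.toFinite _) hrem
  replace hmin : ∀ D, IsPivotal i D → D ∉ A → key i C ≤ key i D :=
    fun D hD hDA => hmin D ⟨hD, hDA⟩
  obtain ⟨d', hd'⟩ : ∃ d', C.card = d' + 1 := ⟨C.card - 1, by have := hC.lt_card; omega⟩
  obtain ⟨f, hf, rfl⟩ := hC.isChain.exists_strictMono_image_eq hd'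
  obtain ⟨j, -, hj⟩ := Finset.mem_image.1 hC.pivot_mem
  have := mono_toPrism.{v} hf
  have hpo := Subcomplex.isPushout_of_preimage_eq_horn (stage.{v} i A) _
    (preimage_toPrism_eq_horn hf j fun k p hp => by
      rw [hj]
      exact mem_stage_iff_of_subset hm hA hC hCA hmin hp)
  have hrest := expansionAux_stage hm i _ (hA.insert hC hmin) d' fun D hD hDA => by
    have := card_le_of_key_le (hmin D hD fun h => hDA (Finset.mem_insert_of_mem h))
    omega
  rw [← stage_sup_range_toPrism hf] at hrest
  exact ExpansionAux.step d d' (by have := hC.lt_card; omega) (by have := hd _ hC hCA; omega)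
    j _ _ _ hpo hrest
termination_by Aᶜ.card
decreasing_by exact Finset.card_lt_card (Finset.compl_ssubset_compl.2 (Finset.ssubset_insert hCA))

instance mono_prismHornIncl (i : Fin (m + 1)) : Mono (prismHornIncl.{v} m n i) := by
  have (k : SimplexCategoryᵒᵖ) : Mono ((prismHornIncl.{v} m n i).app k) :=
    (mono_iff_injective _).2 Subtype.val_injective
  exact NatTrans.mono_of_mono_app _

theorem isExpansion_prismHornIncl (hm : 1 ≤ m) (i : Fin (m + 1)) :
    IsExpansion m (prismHornIncl.{v} m n i) := by
  have h := expansionAux_stage.{v} (n := n) hm i ∅ (fun _ h => absurd h (Finset.notMem_empty _)) 0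
    fun _ hD _ => by have := hD.lt_card; omega
  rw [stage_empty] at h
  exact h.iso_comp (Subcomplex.toRange (prismHornIncl.{v} m n i))

def prodSSetSwap (A B : SSet.{v}) : prodSSet A B ≅ prodSSet B A :=
  NatIso.ofComponents (fun _ => { hom := TypeCat.ofHom Prod.swap, inv := TypeCat.ofHom Prod.swap })
    fun _ => rfl

def prismHorn'IsoPrismHorn (m n : ℕ) (j : Fin (n + 1)) :
    prismHorn'.{v} m n j ≅ prismHorn.{v} n m j :=
  NatIso.ofComponents (fun _ => {
    hom := TypeCat.ofHom fun p => ⟨p.1.swap, p.2.symm⟩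
    inv := TypeCat.ofHom fun p => ⟨p.1.swap, p.2.symm⟩ }) fun _ => rfl

theorem isExpansion_prismHornIncl' (hn : 1 ≤ n) (j : Fin (n + 1)) :
    IsExpansion n (prismHornIncl'.{v} m n j) :=
  ((isExpansion_prismHornIncl.{v} (n := m) hn j).comp_iso (prodSSetSwap _ _).hom).iso_comp
    (prismHorn'IsoPrismHorn m n j).hom

/-- For `m, n ≥ 1`, the inclusion `Λ^{m,n}ᵢ ↪ Δᵐ × Δⁿ` is an `m`-expansion
for every `0 ≤ i ≤ m`, and the inclusion `Λ̃^{m,n}ⱼ ↪ Δᵐ × Δⁿ` is an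
`n`-expansion for every `0 ≤ j ≤ n`. -/
theorem prismHorn_isExpansion (m n : ℕ) (hm : 1 ≤ m) (hn : 1 ≤ n) :
    (∀ i : Fin (m + 1), IsExpansion m (prismHornIncl.{v} m n i)) ∧
    (∀ j : Fin (n + 1), IsExpansion n (prismHornIncl'.{v} m n j)) :=
  ⟨isExpansion_prismHornIncl hm, isExpansion_prismHornIncl' hn⟩

end Paper
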